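/- arXiv:2110.15436 — 2 statements merged into one kernel-verified Lean document; each statement's English description precedes it below -/
import Mathlib

section
/- For real numbers a ≥ b ≥ 0 and a real exponent q ≥ 1, one has (a + b)^q ≤ a^q + (2^q − 1) a^(q−1) b. -/
/-! Since `x ↦ x ^ q` is convex on `[1, 2]`, its graph lies below the chord there:
`(1 + t) ^ q ≤ 1 + (2 ^ q - 1) t` for `t ∈ [0, 1]`. Putting `t = b / a` and multiplying by `a ^ q`
gives the inequality. -/

open Real

theorem one_add_rpow_le_of_le_one {q t : ℝ} (hq : 1 ≤ q) (ht₀ : 0 ≤ t) (ht₁ : t ≤ 1) :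
    (1 + t) ^ q ≤ 1 + (2 ^ q - 1) * t := by
  have h := (convexOn_rpow hq).2 (Set.mem_Ici.2 zero_le_one) (Set.mem_Ici.2 zero_le_two)
    (sub_nonneg.2 ht₁) ht₀ (sub_add_cancel 1 t)
  simp only [smul_eq_mul, one_rpow, mul_one] at h
  calc (1 + t) ^ q = (1 - t + t * 2) ^ q := by ring_nf
    _ ≤ 1 - t + t * 2 ^ q := h
    _ = 1 + (2 ^ q - 1) * t := by ring

/-- For real numbers `a ≥ b ≥ 0` and a real exponent `q ≥ 1`,
`(a + b)^q ≤ a^q + (2^q − 1) a^(q−1) b`. -/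
theorem stmt_0 (a b q : ℝ) (hb : 0 ≤ b) (hba : b ≤ a) (hq : 1 ≤ q) :
    (a + b) ^ q ≤ a ^ q + (2 ^ q - 1) * a ^ (q - 1) * b := by
  obtain ha | ha := (hb.trans hba).eq_or_lt
  · obtain rfl : b = 0 := le_antisymm (ha ▸ hba) hb
    simp [← ha]
  have hchord := one_add_rpow_le_of_le_one hq (div_nonneg hb ha.le) ((div_le_one ha).2 hba)
  calc (a + b) ^ q = a ^ q * (1 + b / a) ^ q := by
        rw [← mul_rpow ha.le (by positivity), mul_one_add, mul_div_cancel₀ b ha.ne']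
    _ ≤ a ^ q * (1 + (2 ^ q - 1) * (b / a)) := by gcongr
    _ = a ^ q + (2 ^ q - 1) * a ^ (q - 1) * b := by
        rw [rpow_sub_one ha.ne']
        field_simp
end

section
/- For every integer n ≥ 5, the integral over ℝⁿ of |y|²/(1+|y|²)ⁿ dy equals (n(n−4))/(4(n−1)(n−2)) times the integral over ℝⁿ of 1/(1+|y|²)^(n−2) dy. -/
/-!
In polar coordinates both sides become one-dimensional moments
`I(p, k) = ∫₀^∞ r^p / (1 + r²)^k dr`, with `|y|²/(1+|y|²)ⁿ ↦ I(n+1, n)` and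
`1/(1+|y|²)^(n-2) ↦ I(n-1, n-2)`. Integrating `r^(p+1) / (1 + r²)^k` by parts gives
`2k I(p+2, k+1) = (p+1) I(p, k)`, and `1/(1 + r²)^k = (1 + r²)/(1 + r²)^(k+1)` gives
`I(p, k) = I(p, k+1) + I(p+2, k+1)`; three applications of these relations link the two moments.
-/

open MeasureTheory Set Filter Topology Metric Module

noncomputable def radialMoment (p k : ℕ) : ℝ :=
  ∫ r in Ioi (0 : ℝ), r ^ p / (1 + r ^ 2) ^ k

lemma continuous_pow_div_one_add_sq_pow (p k : ℕ) :
    Continuous fun r : ℝ => r ^ p / (1 + r ^ 2) ^ k :=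
  (continuous_pow p).div (by fun_prop) fun r => by positivity

lemma pow_div_one_add_sq_pow_le_rpow (p k : ℕ) {r : ℝ} (hr : 0 < r) :
    r ^ p / (1 + r ^ 2) ^ k ≤ r ^ ((p : ℝ) - 2 * k) := calc
  r ^ p / (1 + r ^ 2) ^ k ≤ r ^ p / (r ^ 2) ^ k := by gcongr; linarith
  _ = r ^ ((p : ℝ) - 2 * k) := by
    rw [← pow_mul, Real.rpow_sub hr, ← Real.rpow_natCast, ← Real.rpow_natCast]
    push_cast
    ring_nf

lemma integrableOn_pow_div_one_add_sq_pow {p k : ℕ} (h : p + 1 < 2 * k) :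
    IntegrableOn (fun r : ℝ => r ^ p / (1 + r ^ 2) ^ k) (Ioi 0) := by
  have hexp : (p : ℝ) - 2 * k < -1 := by
    have : (p : ℝ) + 1 < 2 * k := by exact_mod_cast h
    linarith
  have h_near : IntegrableOn (fun r : ℝ => r ^ p / (1 + r ^ 2) ^ k) (Ioc 0 1) :=
    (continuous_pow_div_one_add_sq_pow p k).integrableOn_Ioc
  have h_far : IntegrableOn (fun r : ℝ => r ^ p / (1 + r ^ 2) ^ k) (Ioi 1) := by
    refine (integrableOn_Ioi_rpow_of_lt hexp one_pos).mono'
      (continuous_pow_div_one_add_sq_pow p k).aestronglyMeasurable.restrict ?_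
    filter_upwards [ae_restrict_mem measurableSet_Ioi] with r (hr : 1 < r)
    rw [Real.norm_of_nonneg (by positivity)]
    exact pow_div_one_add_sq_pow_le_rpow p k (by linarith)
  rw [← Ioc_union_Ioi_eq_Ioi zero_le_one]
  exact h_near.union h_far

lemma tendsto_pow_div_one_add_sq_pow_atTop {p k : ℕ} (h : p < 2 * k) :
    Tendsto (fun r : ℝ => r ^ p / (1 + r ^ 2) ^ k) atTop (𝓝 0) := by
  have hexp : 0 < 2 * (k : ℝ) - p := by
    have : (p : ℝ) < 2 * k := by exact_mod_cast h
    linarith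
  refine squeeze_zero' ?_ ?_ (tendsto_rpow_neg_atTop hexp)
  · filter_upwards [eventually_gt_atTop 0] with r hr
    positivity
  · filter_upwards [eventually_gt_atTop 0] with r hr
    rw [neg_sub]
    exact pow_div_one_add_sq_pow_le_rpow p k hr

lemma hasDerivAt_pow_succ_div_one_add_sq_pow (p k : ℕ) (r : ℝ) :
    HasDerivAt (fun r : ℝ => r ^ (p + 1) / (1 + r ^ 2) ^ k)
      ((p + 1) * (r ^ p / (1 + r ^ 2) ^ k) - 2 * k * (r ^ (p + 2) / (1 + r ^ 2) ^ (k + 1))) r := by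
  have hnum : HasDerivAt (fun r : ℝ => r ^ (p + 1)) ((p + 1 : ℕ) * r ^ p) r :=
    hasDerivAt_pow (p + 1) r
  have hden : HasDerivAt (fun r : ℝ => (1 + r ^ 2) ^ k) (k * (1 + r ^ 2) ^ (k - 1) * (2 * r)) r := by
    simpa using ((hasDerivAt_pow 2 r).const_add 1).fun_pow k
  refine (hnum.div hden (by positivity)).congr_deriv ?_
  rcases k with _ | k
  · simp
  · field_simp
    push_cast
    ring

lemma radialMoment_add_two_succ {p k : ℕ} (h : p + 1 < 2 * k) :
    2 * k * radialMoment (p + 2) (k + 1) = (p + 1) * radialMoment p k := by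
  have hp := integrableOn_pow_div_one_add_sq_pow h
  have hp2 := integrableOn_pow_div_one_add_sq_pow (p := p + 2) (k := k + 1) (by omega)
  have hftc := integral_Ioi_of_hasDerivAt_of_tendsto
    (hasDerivAt_pow_succ_div_one_add_sq_pow p k 0).continuousAt.continuousWithinAt
    (fun r _ => hasDerivAt_pow_succ_div_one_add_sq_pow p k r)
    ((hp.const_mul _).sub (hp2.const_mul _))
    (tendsto_pow_div_one_add_sq_pow_atTop (p := p + 1) (by omega))
  rw [integral_sub (hp.const_mul _) (hp2.const_mul _), integral_const_mul,
    integral_const_mul] at hftc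
  rw [zero_pow p.succ_ne_zero, zero_div, sub_zero] at hftc
  simp only [radialMoment]
  linarith

lemma radialMoment_eq_add {p k : ℕ} (h : p + 1 < 2 * k) :
    radialMoment p k = radialMoment p (k + 1) + radialMoment (p + 2) (k + 1) := by
  rw [radialMoment, radialMoment, radialMoment, ← integral_add
    (integrableOn_pow_div_one_add_sq_pow (by omega))
    (integrableOn_pow_div_one_add_sq_pow (by omega))]
  congr 1 with r
  field_simp
  ring

lemma radialMoment_succ_self {n : ℕ} (hn : 5 ≤ n) :
    radialMoment (n + 1) n =
      n * (n - 4) / (4 * (n - 1) * (n - 2)) * radialMoment (n - 1) (n - 2) := by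
  obtain ⟨m, rfl⟩ : ∃ m, n = m + 5 := ⟨n - 5, by omega⟩
  have ibp₁ : 2 * ((m : ℝ) + 4) * radialMoment (m + 6) (m + 5) =
      (m + 5) * radialMoment (m + 4) (m + 4) := by
    exact_mod_cast radialMoment_add_two_succ (p := m + 4) (k := m + 4) (by omega)
  have ibp₂ : 2 * ((m : ℝ) + 3) * radialMoment (m + 6) (m + 4) =
      (m + 5) * radialMoment (m + 4) (m + 3) := by
    exact_mod_cast radialMoment_add_two_succ (p := m + 4) (k := m + 3) (by omega)
  have split : radialMoment (m + 4) (m + 3) =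
      radialMoment (m + 4) (m + 4) + radialMoment (m + 6) (m + 4) :=
    radialMoment_eq_add (by omega)
  rw [show m + 5 - 1 = m + 4 from rfl, show m + 5 - 2 = m + 3 from rfl, div_mul_eq_mul_div,
    eq_div_iff (by push_cast; ring_nf; positivity)]
  push_cast
  linear_combination 2 * ((m : ℝ) + 3) * ibp₁ - 2 * ((m : ℝ) + 3) * ((m : ℝ) + 5) * split
    - ((m : ℝ) + 5) * ibp₂

lemma integral_norm_pow_div_one_add_sq_pow {E : Type*} [NormedAddCommGroup E] [NormedSpace ℝ E]
    [FiniteDimensional ℝ E] [Nontrivial E] [MeasurableSpace E] [BorelSpace E] (μ : Measure E)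
    [μ.IsAddHaarMeasure] (q k : ℕ) :
    ∫ x, ‖x‖ ^ q / (1 + ‖x‖ ^ 2) ^ k ∂μ =
      finrank ℝ E * μ.real (ball 0 1) * radialMoment (finrank ℝ E - 1 + q) k := by
  rw [integral_fun_norm_addHaar μ fun r => r ^ q / (1 + r ^ 2) ^ k, radialMoment]
  simp only [nsmul_eq_mul, smul_eq_mul, pow_add, mul_div_assoc, mul_assoc]

/-- For every integer `n ≥ 5`,
`∫_{ℝⁿ} |y|²/(1+|y|²)ⁿ dy = (n(n−4))/(4(n−1)(n−2)) · ∫_{ℝⁿ} 1/(1+|y|²)^(n−2) dy`. -/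
theorem stmt_1 (n : ℕ) (hn : 5 ≤ n) :
    (∫ y : EuclideanSpace ℝ (Fin n), ‖y‖ ^ 2 / (1 + ‖y‖ ^ 2) ^ n) =
      ((n : ℝ) * ((n : ℝ) - 4)) / (4 * ((n : ℝ) - 1) * ((n : ℝ) - 2)) *
        ∫ y : EuclideanSpace ℝ (Fin n), 1 / (1 + ‖y‖ ^ 2) ^ (n - 2) := by
  have : NeZero n := ⟨by omega⟩
  have lhs := integral_norm_pow_div_one_add_sq_pow (volume : Measure (EuclideanSpace ℝ (Fin n))) 2 n
  have rhs := integral_norm_pow_div_one_add_sq_pow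
    (volume : Measure (EuclideanSpace ℝ (Fin n))) 0 (n - 2)
  simp only [pow_zero, add_zero, finrank_euclideanSpace_fin] at lhs rhs
  rw [lhs, rhs, show n - 1 + 2 = n + 1 by omega, radialMoment_succ_self hn]
  ring
end
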